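/- arXiv:2601.02804 — 2 statements merged into one kernel-verified Lean document; each statement's English description precedes it below -/
import Mathlib

section
/- In the deterministic mining game with J ≥ 2 miners, the profile α* given by α_j* x_j = (J−1)R/C − ((J−1)R/C)² · c_j/R, where R = Φ+ρΨ and C = Σ_{j∈J} c_j, satisfies the first-order condition (Σ_k α_k* x_k − α_j* x_j)/(Σ_k α_k* x_k)² = c_j/R for every miner j, provided all α_j* x_j > 0. -/
open Finset

/-- The profile with allocations
`y_j = (J−1)R/C − ((J−1)R/C)²·c_j/R` (where `C = ∑_j c_j`) satisfies the
first-order condition `(∑_k y_k − y_j)/(∑_k y_k)² = c_j/R` for every miner,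
provided all `y_j > 0`. -/
theorem stmt6 {ι : Type*} [Fintype ι]
    (hJ : 2 ≤ Fintype.card ι)
    (c : ι → ℝ) (R : ℝ) (hc : ∀ k, 0 < c k) (hR : 0 < R)
    (y : ι → ℝ)
    (hy : ∀ j, y j = ((Fintype.card ι : ℝ) - 1) * R / (∑ k, c k)
        - (((Fintype.card ι : ℝ) - 1) * R / (∑ k, c k)) ^ 2 * c j / R)
    (hypos : ∀ j, 0 < y j) :
    ∀ j, ((∑ k, y k) - y j) / (∑ k, y k) ^ 2 = c j / R := by
  intro j
  have hne : (univ : Finset ι).Nonempty := univ_nonempty_iff.mpr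
    (Fintype.card_pos_iff.mp (by omega))
  have hC : 0 < ∑ k, c k := Finset.sum_pos (fun k _ => hc k) hne
  set J : ℝ := (Fintype.card ι : ℝ) with hJdef
  have hJ1 : (1 : ℝ) ≤ J - 1 := by
    have : (2 : ℝ) ≤ J := by rw [hJdef]; exact_mod_cast hJ
    linarith
  set C : ℝ := ∑ k, c k with hCdef
  set A : ℝ := (J - 1) * R / C with hAdef
  have hA : 0 < A := by positivity
  have hsum : ∑ k, y k = A := by
    have : ∑ k, y k = J * A - A ^ 2 * C / R := by
      rw [Finset.sum_congr rfl (fun k _ => hy k)]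
      rw [Finset.sum_sub_distrib, Finset.sum_const, card_univ]
      simp only [nsmul_eq_mul]
      have : ∑ k, A ^ 2 * c k / R = A ^ 2 * C / R := by
        rw [hCdef, Finset.mul_sum, Finset.sum_div]
      rw [this]
    rw [this, hAdef]
    field_simp
    ring
  rw [hsum, hy j]
  have : A - (A - A ^ 2 * c j / R) = A ^ 2 * c j / R := by ring
  rw [this]
  field_simp
end

section
/- In the deterministic mining game, at the interior equilibrium the allocated computing power of miner j equals y_j* = (J−1)R/C · (1 − (J−1)c_j/C) with R = Φ+ρΨ and C = Σ_j c_j; consequently y_j* > 0 if and only if (J−1)c_j < C. -/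
open Finset

/-- At the interior equilibrium (defined by the first-order
conditions with total power `T > 0`), miner `j`'s allocated power equals
`(J−1)R/C·(1 − (J−1)c_j/C)` with `C = ∑_k c_k`, and it is positive iff
`(J−1)c_j < C`. -/
theorem stmt7 {ι : Type*} [Fintype ι]
    (hJ : 2 ≤ Fintype.card ι)
    (c : ι → ℝ) (R : ℝ) (hc : ∀ k, 0 < c k) (hR : 0 < R)
    (y : ι → ℝ) (hT : 0 < ∑ k, y k)
    (hfoc : ∀ j, ((∑ k, y k) - y j) / (∑ k, y k) ^ 2 = c j / R) :
    ∀ j, y j = ((Fintype.card ι : ℝ) - 1) * R / (∑ k, c k)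
        * (1 - ((Fintype.card ι : ℝ) - 1) * c j / (∑ k, c k))
      ∧ (0 < y j ↔ ((Fintype.card ι : ℝ) - 1) * c j < ∑ k, c k) := by
  set T : ℝ := ∑ k, y k with hTdef
  set C : ℝ := ∑ k, c k with hCdef
  haveI : Nonempty ι := Fintype.card_pos_iff.mp (by omega)
  have hC : 0 < C := Finset.sum_pos (fun k _ => hc k) univ_nonempty
  have hJ1 : (1 : ℝ) < (Fintype.card ι : ℝ) := by exact_mod_cast Nat.lt_of_lt_of_le one_lt_two hJ
  have h1 : ∀ j, T - y j = c j * T ^ 2 / R := by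
    intro j
    have := hfoc j
    field_simp at this
    field_simp
    linarith
  have hsum : ∑ j, (T - y j) = C * T ^ 2 / R := by
    rw [Finset.sum_congr rfl (fun j _ => h1 j), ← Finset.sum_div, ← Finset.sum_mul]
  have hlhs : ∑ j : ι, (T - y j) = ((Fintype.card ι : ℝ) - 1) * T := by
    rw [Finset.sum_sub_distrib, Finset.sum_const, ← hTdef, nsmul_eq_mul, Finset.card_univ]
    ring
  have hTval : T = ((Fintype.card ι : ℝ) - 1) * R / C := by
    have h2 : ((Fintype.card ι : ℝ) - 1) * T = C * T ^ 2 / R := by rw [← hlhs, hsum]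
    field_simp at h2
    have : ((Fintype.card ι : ℝ) - 1) * R = C * T := by nlinarith
    field_simp
    linarith
  intro j
  have hyj : y j = ((Fintype.card ι : ℝ) - 1) * R / C
      * (1 - ((Fintype.card ι : ℝ) - 1) * c j / C) := by
    have h2 : y j = T - c j * T ^ 2 / R := by linarith [h1 j]
    rw [hTval] at h2
    rw [h2]
    field_simp
  refine ⟨hyj, ?_⟩
  have hK : 0 < ((Fintype.card ι : ℝ) - 1) * R / C :=
    div_pos (mul_pos (by linarith) hR) hC
  rw [hyj, mul_pos_iff_of_pos_left hK, sub_pos, div_lt_one hC]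
end
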